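/- arXiv:1803.01911 — 6 statements merged into one kernel-verified Lean document; each statement's English description precedes it below -/
import Mathlib

section
/- In any effect algebra, the zero axiom is redundant: if (E, ⊕) is a partially commutative, partially associative partial operation with an element 1 admitting unique orthocomplements (a ⊕ a⊥ = 1) and satisfying the zero–one law, then setting 0 := 1⊥ one has 0 ⊕ a defined and equal to a for all a. -/
/-- A structure like an effect algebra but without a primitive zero: a partial
binary operation that is partially commutative and partially associative, an
element `1` with unique orthocomplements, and the zero–one law stated with
`1⊥` in place of `0`. -/
structure PreEffectAlgebra (E : Type*) where
  orth : E → E → Prop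
  add : E → E → E
  one : E
  compl : E → E
  orth_comm : ∀ {a b}, orth a b → orth b a
  add_comm : ∀ {a b}, orth a b → add a b = add b a
  orth_assoc_right : ∀ {a b c}, orth a b → orth (add a b) c → orth b c
  orth_assoc : ∀ {a b c}, orth a b → orth (add a b) c → orth a (add b c)
  add_assoc : ∀ {a b c}, orth a b → orth (add a b) c → add (add a b) c = add a (add b c)
  orth_compl : ∀ a, orth a (compl a)
  add_compl : ∀ a, add a (compl a) = one
  compl_unique : ∀ {a x}, orth a x → add a x = one → x = compl a
  zero_one : ∀ {a}, orth a one → a = compl one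

lemma pea_compl_compl {E : Type*} (M : PreEffectAlgebra E) (a : E) :
    M.compl (M.compl a) = a := by
  have h1 := M.orth_compl a
  have h2 := M.add_compl a
  exact (M.compl_unique (M.orth_comm h1) ((M.add_comm h1).symm.trans h2)).symm

/-- For any `a`, `a⊥ ⊥ 1⊥` and `a⊥ ⊕ 1⊥ = a⊥`. -/
lemma pea_key {E : Type*} (M : PreEffectAlgebra E) (a : E) :
    M.orth (M.compl a) (M.compl M.one) ∧
      M.add (M.compl a) (M.compl M.one) = M.compl a := by
  have h1 : M.orth a (M.compl a) := M.orth_compl a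
  have h2 : M.orth (M.add a (M.compl a)) (M.compl M.one) := by
    rw [M.add_compl a]; exact M.orth_compl M.one
  have horth := M.orth_assoc_right h1 h2
  refine ⟨horth, ?_⟩
  have hoa : M.orth a (M.add (M.compl a) (M.compl M.one)) := M.orth_assoc h1 h2
  have hadd : M.add a (M.add (M.compl a) (M.compl M.one)) = M.one := by
    rw [← M.add_assoc h1 h2, M.add_compl a, M.add_compl M.one]
  exact M.compl_unique hoa hadd

/-- The zero axiom is redundant: setting `0 := 1⊥`, one has that `0 ⊕ a` is
defined and equals `a`, for every `a`. -/
theorem preEffectAlgebra_zero_add {E : Type*} (M : PreEffectAlgebra E) (a : E) :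
    M.orth (M.compl M.one) a ∧ M.add (M.compl M.one) a = a := by
  obtain ⟨h1, h2⟩ := pea_key M (M.compl a)
  rw [pea_compl_compl M a] at h1 h2
  exact ⟨M.orth_comm h1, (M.add_comm (M.orth_comm h1)).trans h2⟩
end

section
/- An effect algebra whose induced order is an ortholattice (bounded lattice with the orthocomplement) is orthomodular: if a ≤ b then a ∨ (a⊥ ∧ b) = b. -/
/-- An effect algebra: a partial commutative monoid with orthocomplements and
the zero–one law.  `orth a b` means that the partial sum `a ⊕ b` is defined,
in which case its value is `add a b`. -/
structure EffectAlgebra (E : Type*) where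
  orth : E → E → Prop
  add : E → E → E
  zero : E
  one : E
  compl : E → E
  orth_comm : ∀ {a b}, orth a b → orth b a
  add_comm : ∀ {a b}, orth a b → add a b = add b a
  orth_assoc_right : ∀ {a b c}, orth a b → orth (add a b) c → orth b c
  orth_assoc : ∀ {a b c}, orth a b → orth (add a b) c → orth a (add b c)
  add_assoc : ∀ {a b c}, orth a b → orth (add a b) c → add (add a b) c = add a (add b c)
  zero_orth : ∀ a, orth zero a
  zero_add : ∀ a, add zero a = a
  orth_compl : ∀ a, orth a (compl a)
  add_compl : ∀ a, add a (compl a) = one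
  compl_unique : ∀ {a x}, orth a x → add a x = one → x = compl a
  zero_one : ∀ {a}, orth a one → a = zero

/-- The induced order on an effect algebra: `a ≤ b` iff `a ⊕ c = b` for some `c`. -/
def EffectAlgebra.le {E : Type*} (M : EffectAlgebra E) (a b : E) : Prop :=
  ∃ c, M.orth a c ∧ M.add a c = b

namespace EffectAlgebraAux

variable {E : Type*} (M : EffectAlgebra E)

lemma add_zero (a : E) : M.add a M.zero = a := by
  rw [M.add_comm (M.orth_comm (M.zero_orth a)), M.zero_add]

lemma le_refl (a : E) : M.le a a :=
  ⟨M.zero, M.orth_comm (M.zero_orth a), add_zero M a⟩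

lemma le_trans {x y z : E} (hxy : M.le x y) (hyz : M.le y z) : M.le x z := by
  obtain ⟨u, hu, hu2⟩ := hxy
  obtain ⟨v, hv, hv2⟩ := hyz
  have h1 : M.orth (M.add x u) v := by rw [hu2]; exact hv
  exact ⟨M.add u v, M.orth_assoc hu h1, by rw [← M.add_assoc hu h1, hu2, hv2]⟩

lemma orth_le_compl {x y : E} (h : M.orth x y) : M.le y (M.compl x) := by
  have h1 : M.orth (M.add x y) (M.compl (M.add x y)) := M.orth_compl _
  have h2 : M.orth y (M.compl (M.add x y)) := M.orth_assoc_right h h1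
  have h3 : M.orth x (M.add y (M.compl (M.add x y))) := M.orth_assoc h h1
  have h4 : M.add x (M.add y (M.compl (M.add x y))) = M.one := by
    rw [← M.add_assoc h h1, M.add_compl]
  exact ⟨M.compl (M.add x y), h2, (M.compl_unique h3 h4)⟩

lemma compl_anti {a s : E} (h : M.le a s) : M.le (M.compl s) (M.compl a) := by
  obtain ⟨e, hae, haes⟩ := h
  have h1 : M.orth (M.add a e) (M.compl s) := by rw [haes]; exact M.orth_compl s
  have h2 : M.orth e (M.compl s) := M.orth_assoc_right hae h1
  have h3 : M.orth a (M.add e (M.compl s)) := M.orth_assoc hae h1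
  have h4 : M.add a (M.add e (M.compl s)) = M.one := by
    rw [← M.add_assoc hae h1, haes, M.add_compl]
  have h5 : M.add e (M.compl s) = M.compl a := (M.compl_unique h3 h4)
  exact ⟨e, M.orth_comm h2, by rw [M.add_comm (M.orth_comm h2), h5]⟩

lemma zero_of_le_zero {x : E} (h : M.le x M.zero) : x = M.zero := by
  obtain ⟨y, hy, hy2⟩ := h
  have h1 : M.orth (M.add x y) M.one := by rw [hy2]; exact M.zero_orth M.one
  have h2 : M.orth y M.one := M.orth_assoc_right hy h1
  have hy0 : y = M.zero := M.zero_one h2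
  rw [hy0, add_zero M x] at hy2
  exact hy2

end EffectAlgebraAux

open EffectAlgebraAux in
/-- An effect algebra whose induced order is an ortholattice (with the
effect-algebra orthocomplement) is orthomodular: if `a ≤ b` then
`a ∨ (a⊥ ∧ b) = b`. -/
theorem effectAlgebra_ortholattice_orthomodular {E : Type*} (M : EffectAlgebra E)
    (inf sup : E → E → E)
    (hinf : ∀ a b, M.le (inf a b) a ∧ M.le (inf a b) b ∧
      ∀ x, M.le x a → M.le x b → M.le x (inf a b))
    (hsup : ∀ a b, M.le a (sup a b) ∧ M.le b (sup a b) ∧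
      ∀ x, M.le a x → M.le b x → M.le (sup a b) x)
    (hinf_compl : ∀ a, inf a (M.compl a) = M.zero)
    (hsup_compl : ∀ a, sup a (M.compl a) = M.one)
    {a b : E} (hab : M.le a b) :
    sup a (inf (M.compl a) b) = b := by
  obtain ⟨c, hac, hacb⟩ := hab
  have hca : M.le c (M.compl a) := orth_le_compl M hac
  have hcb : M.le c b := ⟨a, M.orth_comm hac, by rw [M.add_comm (M.orth_comm hac), hacb]⟩
  have hsb : M.le (sup a (inf (M.compl a) b)) b :=
    (hsup _ _).2.2 b ⟨c, hac, hacb⟩ (hinf _ _).2.1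
  obtain ⟨d, hsd, hsdb⟩ := hsb
  have hdcs : M.le d (M.compl (sup a (inf (M.compl a) b))) := orth_le_compl M hsd
  have hcsa : M.le (M.compl (sup a (inf (M.compl a) b))) (M.compl a) :=
    compl_anti M (hsup _ _).1
  have hda : M.le d (M.compl a) := le_trans M hdcs hcsa
  have hdb : M.le d b := ⟨_, M.orth_comm hsd, by rw [M.add_comm (M.orth_comm hsd), hsdb]⟩
  have hdm : M.le d (inf (M.compl a) b) := (hinf _ _).2.2 d hda hdb
  have hds : M.le d (sup a (inf (M.compl a) b)) := le_trans M hdm (hsup _ _).2.1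
  obtain ⟨w, hdw, hdws⟩ := hds
  have hsd' : M.orth (M.add d w) d := by rw [hdws]; exact hsd
  have hwd : M.orth w d := M.orth_assoc_right hdw hsd'
  have hsd'' : M.orth (M.add w d) d := by rw [← M.add_comm hdw]; exact hsd'
  have hdd : M.orth d d := M.orth_assoc_right hwd hsd''
  have hdcd : M.le d (M.compl d) := orth_le_compl M hdd
  have hd0 : M.le d M.zero := by
    have h := (hinf d (M.compl d)).2.2 d (le_refl M d) hdcd
    rwa [hinf_compl d] at h
  have hdz : d = M.zero := zero_of_le_zero M hd0
  rw [hdz, add_zero M] at hsdb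
  exact hsdb
end

section
/- Every D-poset gives rise to an effect algebra: if E is a poset with maximum 1 and a partial operation ⊖ satisfying (D1) a ⊖ b is defined iff b ≤ a, (D2) a ⊖ b ≤ a, (D3) a ⊖ (a ⊖ b) = b, (D4) a ≤ b ≤ c implies c ⊖ b ≤ c ⊖ a and (c ⊖ a) ⊖ (c ⊖ b) = b ⊖ a, then defining a ⊕ b = c iff c ⊖ b = a and a⊥ = 1 ⊖ a makes E an effect algebra whose induced order and difference agree with the given ones. -/
/-- Every D-poset gives rise to an effect algebra: given a poset with maximum
`1` and a partial difference `⊖` (defined on `b ≤ a`, here a total function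
whose axioms are only imposed there) satisfying (D1)–(D4), the operations
`a ⊕ b = c ↔ c ⊖ b = a` and `a⊥ = 1 ⊖ a` turn it into an effect algebra whose
induced order and difference agree with the given ones. -/
theorem dposet_gives_effectAlgebra {E : Type*} [PartialOrder E] (one : E) (sub : E → E → E)
    (hone : ∀ a, a ≤ one)
    (hD2 : ∀ {a b : E}, b ≤ a → sub a b ≤ a)
    (hD3 : ∀ {a b : E}, b ≤ a → sub a (sub a b) = b)
    (hD4 : ∀ {a b c : E}, a ≤ b → b ≤ c →
      sub c b ≤ sub c a ∧ sub (sub c a) (sub c b) = sub b a) :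
    ∃ M : EffectAlgebra E,
      M.one = one ∧
      (∀ a b, M.orth a b ↔ ∃ c, b ≤ c ∧ sub c b = a) ∧
      (∀ a b c, b ≤ c → sub c b = a → M.add a b = c) ∧
      (∀ a, M.compl a = sub one a) ∧
      (∀ a b, M.le a b ↔ a ≤ b) ∧
      (∀ a b, a ≤ b → M.orth (sub b a) a ∧ M.add (sub b a) a = b) := by
  classical
  -- notation: zero
  set z : E := sub one one with hz
  -- sub m zero = m for m of the form sub one x, and zero ≤ sub one x
  have hz_le : ∀ x : E, z ≤ x := by
    intro x
    have h := (hD4 (hone (sub one x)) (le_refl one)).1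
    rwa [hD3 (hone x)] at h
  have hsub_zero : ∀ x : E, sub x z = x := by
    intro x
    have h := (hD4 (hone (sub one x)) (le_refl one)).2
    rw [hD3 (hone x)] at h
    exact h
  have hinj : ∀ {x u v : E}, u ≤ x → v ≤ x → sub x u = sub x v → u = v := by
    intro x u v hu hv h
    rw [← hD3 hu, h, hD3 hv]
  have hsub_self : ∀ x : E, sub x x = z := by
    intro x
    have h := (hD4 (hz_le x) (le_refl x)).2
    rw [hsub_zero] at h
    exact hinj (hD2 le_rfl) (hz_le x) (by rw [h, hsub_zero])
  have huniq : ∀ {b c c' : E}, b ≤ c → b ≤ c' → sub c b = sub c' b → c = c' := by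
    intro b c c' h1 h2 h3
    have k1 := (hD4 h1 (hone c)).2
    have k2 := (hD4 h2 (hone c')).2
    have e : sub one c = sub one c' :=
      hinj (hD4 h1 (hone c)).1 (hD4 h2 (hone c')).1 (by rw [k1, k2, h3])
    calc c = sub one (sub one c) := (hD3 (hone c)).symm
      _ = sub one (sub one c') := by rw [e]
      _ = c' := hD3 (hone c')
  -- the partial sum
  let addf : E → E → E := fun a b =>
    if h : ∃ d, b ≤ d ∧ sub d b = a then h.choose else one
  have hadd_eq : ∀ {a b c : E}, b ≤ c → sub c b = a → addf a b = c := by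
    intro a b c h1 h2
    have hex : ∃ d, b ≤ d ∧ sub d b = a := ⟨c, h1, h2⟩
    show (if h : ∃ d, b ≤ d ∧ sub d b = a then h.choose else one) = c
    rw [dif_pos hex]
    exact huniq hex.choose_spec.1 h1 (hex.choose_spec.2.trans h2.symm)
  refine ⟨{
    orth := fun a b => ∃ c, b ≤ c ∧ sub c b = a
    add := addf
    zero := z
    one := one
    compl := fun a => sub one a
    orth_comm := by
      rintro a b ⟨c, h1, rfl⟩
      exact ⟨c, hD2 h1, hD3 h1⟩
    add_comm := by
      rintro a b ⟨c, h1, rfl⟩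
      rw [hadd_eq h1 rfl, hadd_eq (hD2 h1) (hD3 h1)]
    orth_assoc_right := by
      rintro a b c ⟨p, hbp, hpb⟩ ⟨q, hcq, hqc⟩
      rw [hadd_eq hbp hpb] at hqc
      have hap : a ≤ p := hpb ▸ hD2 hbp
      have hpq : p ≤ q := hqc ▸ hD2 hcq
      have key := hD4 hap hpq
      have hqp : sub q p = c := by rw [← hqc, hD3 hcq]
      have hpa : sub p a = b := by rw [← hpb, hD3 hbp]
      exact ⟨sub q a, hqp ▸ key.1, by rw [← hqp, key.2, hpa]⟩
    orth_assoc := by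
      rintro a b c ⟨p, hbp, hpb⟩ ⟨q, hcq, hqc⟩
      rw [hadd_eq hbp hpb] at hqc
      have hap : a ≤ p := hpb ▸ hD2 hbp
      have hpq : p ≤ q := hqc ▸ hD2 hcq
      have haq : a ≤ q := hap.trans hpq
      have key := hD4 hap hpq
      have hqp : sub q p = c := by rw [← hqc, hD3 hcq]
      have hpa : sub p a = b := by rw [← hpb, hD3 hbp]
      have hcr : c ≤ sub q a := hqp ▸ key.1
      have hrc : sub (sub q a) c = b := by rw [← hqp, key.2, hpa]
      rw [hadd_eq hcr hrc]
      exact ⟨q, hD2 haq, hD3 haq⟩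
    add_assoc := by
      rintro a b c ⟨p, hbp, hpb⟩ ⟨q, hcq, hqc⟩
      rw [hadd_eq hbp hpb] at hqc
      have hap : a ≤ p := hpb ▸ hD2 hbp
      have hpq : p ≤ q := hqc ▸ hD2 hcq
      have haq : a ≤ q := hap.trans hpq
      have key := hD4 hap hpq
      have hqp : sub q p = c := by rw [← hqc, hD3 hcq]
      have hpa : sub p a = b := by rw [← hpb, hD3 hbp]
      have hcr : c ≤ sub q a := hqp ▸ key.1
      have hrc : sub (sub q a) c = b := by rw [← hqp, key.2, hpa]
      rw [hadd_eq hbp hpb, hadd_eq hcq hqc, hadd_eq hcr hrc,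
        hadd_eq (hD2 haq) (hD3 haq)]
    zero_orth := fun a => ⟨a, le_rfl, hsub_self a⟩
    zero_add := fun a => hadd_eq le_rfl (hsub_self a)
    orth_compl := fun a => ⟨one, hD2 (hone a), hD3 (hone a)⟩
    add_compl := fun a => hadd_eq (hD2 (hone a)) (hD3 (hone a))
    compl_unique := by
      rintro a x ⟨c, h1, h2⟩ h3
      rw [hadd_eq h1 h2] at h3
      subst h3
      rw [← hD3 (hone x), h2]
    zero_one := by
      rintro a ⟨c, h1, h2⟩
      have : c = one := le_antisymm (hone c) h1
      subst this
      exact h2.symm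
  }, rfl, fun a b => Iff.rfl, fun a b c h1 h2 => hadd_eq h1 h2, fun a => rfl, ?_, ?_⟩
  · intro a b
    constructor
    · rintro ⟨c, ⟨d, h1, h2⟩, h3⟩
      have h3 : addf a c = b := h3
      rw [hadd_eq h1 h2] at h3
      subst h3
      exact h2 ▸ hD2 h1
    · intro h
      exact ⟨sub b a, ⟨b, hD2 h, hD3 h⟩, hadd_eq (hD2 h) (hD3 h)⟩
  · exact fun a b h => ⟨⟨b, h, rfl⟩, hadd_eq h rfl⟩
end

section
/- In any effect monoid M, if a₁, …, aₙ and b₁, …, bₙ satisfy a₁ ⊕ ⋯ ⊕ aₙ = 1 and (a₁ ⊙ b₁) ⊕ ⋯ ⊕ (aₙ ⊙ bₙ) = 1 (all sums defined), then aᵢ ⊙ bᵢ = aᵢ for every i. -/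
/-- An effect monoid: an effect algebra with an associative multiplication with
unit `1`, distributing over the partial sum (including definedness of all the
summands involved). -/
structure EffectMonoid (E : Type*) extends EffectAlgebra E where
  mul : E → E → E
  one_mul : ∀ a, mul one a = a
  mul_one : ∀ a, mul a one = a
  mul_assoc : ∀ a b c, mul (mul a b) c = mul a (mul b c)
  distrib : ∀ {a b c d}, orth a b → orth c d →
    orth (mul a c) (mul b c) ∧
    orth (add (mul a c) (mul b c)) (mul a d) ∧
    orth (add (add (mul a c) (mul b c)) (mul a d)) (mul b d) ∧
    mul (add a b) (add c d) =
      add (add (add (mul a c) (mul b c)) (mul a d)) (mul b d)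

/-- `IsOSum M l s` : the partial sum of the list `l` is defined and equals `s`. -/
inductive IsOSum {E : Type*} (M : EffectAlgebra E) : List E → E → Prop
  | nil : IsOSum M [] M.zero
  | cons {x s t : E} {l : List E} : IsOSum M l s → M.orth x s → t = M.add x s →
      IsOSum M (x :: l) t

namespace EffectAlgebra
variable {E : Type*} (M : EffectAlgebra E)

theorem orth_zero (a : E) : M.orth a M.zero := M.orth_comm (M.zero_orth a)

theorem add_zero (a : E) : M.add a M.zero = a := by
  rw [M.add_comm (M.orth_zero a), M.zero_add]

theorem compl_compl (a : E) : M.compl (M.compl a) = a :=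
  (M.compl_unique (M.orth_comm (M.orth_compl a))
    (by rw [M.add_comm (M.orth_comm (M.orth_compl a)), M.add_compl])).symm

theorem cancel {a b c : E} (hab : M.orth a b) (hac : M.orth a c)
    (h : M.add a b = M.add a c) : b = c := by
  have key : ∀ {x : E}, M.orth a x → M.add a x = M.add a b →
      M.add a (M.compl (M.add a b)) = M.compl x := by
    intro x hax hx
    have h1 : M.orth (M.add a x) (M.compl (M.add a b)) := by
      rw [hx]; exact M.orth_compl _
    have hxa : M.orth x a := M.orth_comm hax
    have h1' : M.orth (M.add x a) (M.compl (M.add a b)) := by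
      rwa [M.add_comm hax] at h1
    have h2 : M.orth x (M.add a (M.compl (M.add a b))) := M.orth_assoc hxa h1'
    have h3 : M.add x (M.add a (M.compl (M.add a b))) = M.one := by
      rw [← M.add_assoc hxa h1', M.add_comm hxa, hx, M.add_compl]
    exact M.compl_unique h2 h3
  have hb := key hab rfl
  have hc := key hac h.symm
  have hbc : M.compl b = M.compl c := by rw [← hb, ← hc]
  calc b = M.compl (M.compl b) := (M.compl_compl b).symm
    _ = M.compl (M.compl c) := by rw [hbc]
    _ = c := M.compl_compl c

theorem eq_zero_of_add_eq_zero {a b : E} (hab : M.orth a b)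
    (h : M.add a b = M.zero) : a = M.zero ∧ b = M.zero := by
  have h1 : M.orth (M.add a b) M.one := by rw [h]; exact M.zero_orth _
  have hb : b = M.zero := M.zero_one (M.orth_assoc_right hab h1)
  refine ⟨?_, hb⟩
  rw [hb, M.add_zero] at h
  exact h

theorem le_refl (a : E) : M.le a a := ⟨M.zero, M.orth_zero a, M.add_zero a⟩

end EffectAlgebra

namespace EffectMonoid
variable {E : Type*} (M : EffectMonoid E)

theorem zero_mul (x : E) : M.mul M.zero x = M.zero := by
  obtain ⟨o1, o2, o3, heq⟩ :=
    M.distrib (M.zero_orth M.one) (M.orth_compl x)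
  simp only [M.zero_add, M.add_compl, M.mul_one, M.one_mul] at heq o1 o2 o3
  -- heq : 1 = ((u ⊕ x) ⊕ w) ⊕ xᶜ with u = mul 0 x, w = mul 0 xᶜ
  set u := M.mul M.zero x with hu
  set w := M.mul M.zero (M.compl x) with hw
  have hx : M.add (M.add u x) w = x := by
    have h1 : M.orth (M.compl x) (M.add (M.add u x) w) := M.toEffectAlgebra.orth_comm o3
    have h2 : M.add (M.compl x) (M.add (M.add u x) w) = M.one := by
      rw [M.toEffectAlgebra.add_comm h1, ← heq]
    have := M.toEffectAlgebra.compl_unique h1 h2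
    rw [this, M.toEffectAlgebra.compl_compl]
  have hxu : M.orth x u := M.toEffectAlgebra.orth_comm o1
  have o2' : M.orth (M.add x u) w := by rwa [M.toEffectAlgebra.add_comm o1] at o2
  have hx2 : M.add x (M.add u w) = x := by
    rw [← M.toEffectAlgebra.add_assoc hxu o2', M.toEffectAlgebra.add_comm hxu, hx]
  have houw : M.orth u w := M.toEffectAlgebra.orth_assoc_right hxu o2'
  have hxo : M.orth x (M.add u w) := M.toEffectAlgebra.orth_assoc hxu o2'
  have huw0 : M.add u w = M.zero := by
    apply M.toEffectAlgebra.cancel hxo (M.toEffectAlgebra.orth_zero x)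
    rw [hx2, M.toEffectAlgebra.add_zero]
  exact (M.toEffectAlgebra.eq_zero_of_add_eq_zero houw huw0).1

theorem mul_le_self (a b : E) : M.toEffectAlgebra.le (M.mul a b) a := by
  obtain ⟨o1, o2, o3, heq⟩ := M.distrib (M.zero_orth a) (M.orth_compl b)
  simp only [M.zero_mul, M.zero_add, M.add_compl, M.mul_one,
    M.toEffectAlgebra.add_zero] at heq o1 o2 o3
  exact ⟨M.mul a (M.compl b), o3, heq.symm⟩

end EffectMonoid

theorem osum_squeeze {E : Type*} (M : EffectAlgebra E) :
    ∀ {xs ys : List E}, List.Forall₂ M.le xs ys →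
      ∀ {s t : E}, IsOSum M xs s → IsOSum M ys t → M.le t s → xs = ys ∧ s = t := by
  intro xs ys hrel
  induction hrel with
  | nil =>
    intro s t hs ht _
    cases hs; cases ht; exact ⟨rfl, rfl⟩
  | @cons x y xs' ys' hxy hrel ih =>
    intro s t hs ht hts
    rcases hs with _ | ⟨hs', hxs', rfl⟩
    rcases ht with _ | ⟨ht', hyt', rfl⟩
    rename_i s' t'
    obtain ⟨c, hxc, hc⟩ := hxy
    obtain ⟨e, hte, he⟩ := hts
    -- he : (y ⊕ t') ⊕ e = x ⊕ s'
    have h1 : M.orth (M.add y t') e := hte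
    have ht'e : M.orth t' e := M.orth_assoc_right hyt' h1
    have hyte : M.orth y (M.add t' e) := M.orth_assoc hyt' h1
    have step1 : M.add y (M.add t' e) = M.add x s' := by
      rw [← M.add_assoc hyt' h1, he]
    -- y = x ⊕ c
    have hxcte : M.orth (M.add x c) (M.add t' e) := by rwa [hc]
    have hcte : M.orth c (M.add t' e) := M.orth_assoc_right hxc hxcte
    have hxrest : M.orth x (M.add c (M.add t' e)) := M.orth_assoc hxc hxcte
    have step2 : M.add x (M.add c (M.add t' e)) = M.add x s' := by
      rw [← M.add_assoc hxc hxcte, hc, step1]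
    have hs'eq : M.add c (M.add t' e) = s' := M.cancel hxrest hxs' step2
    -- rearrange to t' ⊕ (e ⊕ c)
    have h2 : M.orth (M.add t' e) c := M.orth_comm hcte
    have hec : M.orth e c := M.orth_assoc_right ht'e h2
    have ht'ec : M.orth t' (M.add e c) := M.orth_assoc ht'e h2
    have hs'eq2 : M.add t' (M.add e c) = s' := by
      rw [← M.add_assoc ht'e h2, ← M.add_comm hcte, hs'eq]
    obtain ⟨htl, hst⟩ := ih hs' ht' ⟨M.add e c, ht'ec, hs'eq2⟩
    -- now s' = t', so e ⊕ c = 0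
    have hec0 : M.add e c = M.zero := by
      apply M.cancel ht'ec (M.orth_zero t')
      rw [hs'eq2, hst, M.add_zero]
    obtain ⟨he0, hc0⟩ := M.eq_zero_of_add_eq_zero hec hec0
    have hxyeq : x = y := by rw [← hc, hc0, M.add_zero]
    subst htl
    refine ⟨by rw [hxyeq], ?_⟩
    rw [hxyeq, hst]

theorem forall2_ofFn {E : Type*} (R : E → E → Prop) :
    ∀ {n : ℕ} {f g : Fin n → E}, (∀ i, R (f i) (g i)) →
      List.Forall₂ R (List.ofFn f) (List.ofFn g) := by
  intro n
  induction n with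
  | zero => intro f g _; simp
  | succ m ih =>
    intro f g h
    rw [List.ofFn_succ, List.ofFn_succ]
    exact List.Forall₂.cons (h 0) (ih fun i => h i.succ)

/-- In an effect monoid, if `a₁ ⊕ ⋯ ⊕ aₙ = 1` and
`(a₁ ⊙ b₁) ⊕ ⋯ ⊕ (aₙ ⊙ bₙ) = 1` (all sums defined), then `aᵢ ⊙ bᵢ = aᵢ`
for every `i`. -/
theorem effectMonoid_mul_eq_of_sums_one {E : Type*} (M : EffectMonoid E) {n : ℕ}
    (a b : Fin n → E)
    (ha : IsOSum M.toEffectAlgebra (List.ofFn a) M.one)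
    (hab : IsOSum M.toEffectAlgebra (List.ofFn fun i => M.mul (a i) (b i)) M.one) :
    ∀ i, M.mul (a i) (b i) = a i := by
  have hrel : List.Forall₂ M.toEffectAlgebra.le
      (List.ofFn fun i => M.mul (a i) (b i)) (List.ofFn a) :=
    forall2_ofFn _ fun i => M.mul_le_self (a i) (b i)
  obtain ⟨hlist, -⟩ := osum_squeeze M.toEffectAlgebra hrel hab ha
      (M.toEffectAlgebra.le_refl M.one)
  intro i
  have := List.ofFn_inj.mp hlist
  exact congrFun this i
end

section
/- In any effect divisoid, if a ⊕ b is defined and a ⊕ b ≤ c, then (a ⊕ b)/c = (a/c) ⊕ (b/c) (in particular a/c ⊥ b/c). -/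
/-- An effect divisoid: an effect monoid with a partial division `a/b`
(meaningful when `a ≤ b`), where `a/b` is the unique element with
`a/b ≤ b/b` and `b ⊙ (a/b) = a`, and moreover `a ≤ a/a` and
`(a/a)/(a/a) = a/a`. -/
structure EffectDivisoid (E : Type*) extends EffectMonoid E where
  div : E → E → E
  div_le : ∀ {a b}, toEffectAlgebra.le a b → toEffectAlgebra.le (div a b) (div b b)
  mul_div : ∀ {a b}, toEffectAlgebra.le a b → mul b (div a b) = a
  div_unique : ∀ {a b x}, toEffectAlgebra.le a b → toEffectAlgebra.le x (div b b) →
    mul b x = a → x = div a b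
  le_div_self : ∀ a, toEffectAlgebra.le a (div a a)
  div_div_self : ∀ a, div (div a a) (div a a) = div a a


section Helpers

variable {E : Type*}

lemma ea_orth_zero (M : EffectAlgebra E) (a : E) : M.orth a M.zero :=
  M.orth_comm (M.zero_orth a)

lemma ea_add_zero (M : EffectAlgebra E) (a : E) : M.add a M.zero = a := by
  rw [M.add_comm (ea_orth_zero M a), M.zero_add]

lemma ea_le_refl (M : EffectAlgebra E) (a : E) : M.le a a :=
  ⟨M.zero, ea_orth_zero M a, ea_add_zero M a⟩

lemma ea_le_trans (M : EffectAlgebra E) {a b c : E} (h1 : M.le a b) (h2 : M.le b c) :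
    M.le a c := by
  obtain ⟨x, hx, rfl⟩ := h1
  obtain ⟨y, hy, rfl⟩ := h2
  exact ⟨M.add x y, M.orth_assoc hx hy, (M.add_assoc hx hy).symm⟩

lemma ea_orth_left (M : EffectAlgebra E) {u v w : E} (huv : M.orth u v)
    (h : M.orth (M.add u v) w) : M.orth u w := by
  apply M.orth_assoc_right (M.orth_comm huv)
  rwa [← M.add_comm huv]

/-- Reassociation from the right: from `orth v w` and `orth u (v ⊕ w)` obtain
`orth u v`, `orth (u ⊕ v) w` and the associativity equation. -/
lemma ea_assoc' (M : EffectAlgebra E) {u v w : E} (hvw : M.orth v w)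
    (h : M.orth u (M.add v w)) :
    M.orth u v ∧ M.orth (M.add u v) w ∧
      M.add u (M.add v w) = M.add (M.add u v) w := by
  have h' : M.orth (M.add v w) u := M.orth_comm h
  have huv : M.orth u v := M.orth_comm (ea_orth_left M hvw h')
  have hwu : M.orth w u := M.orth_assoc_right hvw h'
  have hv_wu : M.orth v (M.add w u) := M.orth_assoc hvw h'
  have h2 : M.orth (M.add w u) v := M.orth_comm hv_wu
  have hw_uv : M.orth w (M.add u v) := M.orth_assoc hwu h2
  have huv_w : M.orth (M.add u v) w := M.orth_comm hw_uv
  exact ⟨huv, huv_w, (M.add_assoc huv huv_w).symm⟩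

lemma ea_add_eq_zero (M : EffectAlgebra E) {x y : E} (hxy : M.orth x y)
    (h : M.add x y = M.zero) : x = M.zero := by
  have h1 : M.orth (M.add x y) M.one := by rw [h]; exact M.zero_orth M.one
  have hy : y = M.zero := M.zero_one (M.orth_assoc_right hxy h1)
  rw [hy, ea_add_zero] at h
  exact h

/-- Cancellation in an effect algebra. -/
lemma ea_cancel (M : EffectAlgebra E) {a x y : E} (hax : M.orth a x) (hay : M.orth a y)
    (h : M.add a x = M.add a y) : x = y := by
  have hcompl : ∀ z, M.orth a z → M.add a z = M.add a x →
      z = M.compl (M.add (M.compl (M.add a x)) a) := by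
    intro z haz hz
    have h1 : M.orth (M.add a z) (M.compl (M.add a x)) := by
      rw [hz]; exact M.orth_compl _
    have h2 : M.orth z (M.compl (M.add a x)) := M.orth_assoc_right haz h1
    have h3 : M.orth a (M.add z (M.compl (M.add a x))) := M.orth_assoc haz h1
    have h4 : M.add a (M.add z (M.compl (M.add a x))) = M.one := by
      rw [← M.add_assoc haz h1, hz, M.add_compl]
    have h5 : M.orth (M.add z (M.compl (M.add a x))) a := M.orth_comm h3
    have h6 : M.orth z (M.add (M.compl (M.add a x)) a) := M.orth_assoc h2 h5
    have h7 : M.add z (M.add (M.compl (M.add a x)) a) = M.one := by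
      rw [← M.add_assoc h2 h5, M.add_comm h5]
      exact h4
    refine M.compl_unique (M.orth_comm h6) ?_
    rw [M.add_comm (M.orth_comm h6)]
    exact h7
  rw [hcompl x hax rfl, hcompl y hay h.symm]

lemma em_zero_mul (M : EffectMonoid E) (a : E) : M.mul M.zero a = M.zero := by
  obtain ⟨h1, h2, h3, _⟩ := M.distrib (M.zero_orth M.one) (M.orth_compl a)
  simp only [M.one_mul] at h1 h2 h3
  -- p := 0⊙a, q := 0⊙a'
  have haq : M.orth a (M.mul M.zero (M.compl a)) := M.orth_assoc_right h1 h2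
  have hpaq : M.orth (M.mul M.zero a)
      (M.add a (M.mul M.zero (M.compl a))) := M.orth_assoc h1 h2
  rw [M.add_comm haq] at hpaq
  obtain ⟨hpq, hpq_a, _⟩ := ea_assoc' M.toEffectAlgebra (M.orth_comm haq) hpaq
  have hrw : M.add (M.add (M.mul M.zero a) a) (M.mul M.zero (M.compl a)) =
      M.add (M.add (M.mul M.zero a) (M.mul M.zero (M.compl a))) a := by
    rw [M.add_assoc h1 h2, M.add_comm haq]
    exact (ea_assoc' M.toEffectAlgebra (M.orth_comm haq) hpaq).2.2
  rw [hrw] at h3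
  have hone : M.orth (M.add (M.mul M.zero a) (M.mul M.zero (M.compl a))) M.one := by
    have := M.orth_assoc hpq_a h3
    rwa [M.add_compl] at this
  exact ea_add_eq_zero M.toEffectAlgebra hpq (M.zero_one hone)

lemma em_mul_add (M : EffectMonoid E) (s : E) {x y : E} (hxy : M.orth x y) :
    M.orth (M.mul s x) (M.mul s y) ∧
      M.mul s (M.add x y) = M.add (M.mul s x) (M.mul s y) := by
  obtain ⟨h1, h2, h3, heq⟩ := M.distrib (ea_orth_zero M.toEffectAlgebra s) hxy
  simp only [em_zero_mul, ea_add_zero] at h1 h2 h3 heq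
  exact ⟨h2, heq⟩

lemma em_mul_le (M : EffectMonoid E) (s x : E) : M.le (M.mul s x) s := by
  obtain ⟨h2, heq⟩ := em_mul_add M s (M.orth_compl x)
  rw [M.add_compl, M.mul_one] at heq
  exact ⟨M.mul s (M.compl x), h2, heq.symm⟩

end Helpers

/-- In an effect divisoid, if `a ⊕ b` is defined and `a ⊕ b ≤ c`, then
`a/c ⊥ b/c` and `(a ⊕ b)/c = (a/c) ⊕ (b/c)`. -/
theorem effectDivisoid_div_add {E : Type*} (M : EffectDivisoid E) {a b c : E}
    (hab : M.orth a b) (habc : M.le (M.add a b) c) :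
    M.orth (M.div a c) (M.div b c) ∧
    M.div (M.add a b) c = M.add (M.div a c) (M.div b c) := by
  set d := M.add a b with hd
  have had : M.le a d := ⟨b, hab, hd.symm⟩
  have hbd : M.le b d := ⟨a, M.orth_comm hab, (M.add_comm (M.orth_comm hab)).trans hd.symm⟩
  have ha : M.le a c := ea_le_trans _ had habc
  have hb : M.le b c := ea_le_trans _ hbd habc
  have hdd : M.le d d := ea_le_refl _ d
  have hde : M.mul d (M.div d d) = d := M.mul_div hdd
  obtain ⟨t, ht, hte⟩ := M.div_le had
  have htle : M.le t (M.div d d) :=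
    ⟨M.div a d, M.orth_comm ht, (M.add_comm ht).symm.trans hte⟩
  have hsplit := em_mul_add M.toEffectMonoid d ht
  have hda : M.mul d (M.div a d) = a := M.mul_div had
  have key : d = M.add a (M.mul d t) := by
    have h := hsplit.2
    rw [hte, hde, hda] at h
    exact h
  have hb' : b = M.mul d t := by
    refine ea_cancel _ hab (hda ▸ hsplit.1) ?_
    rw [← key, hd]
  have htb : t = M.div b d := M.div_unique hbd htle hb'.symm
  have hAB : M.orth (M.div a d) (M.div b d) := htb ▸ ht
  have heAB : M.add (M.div a d) (M.div b d) = M.div d d := htb ▸ hte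
  have hsc : M.le (M.div d c) (M.div c c) := M.div_le habc
  have hcd : M.mul c (M.div d c) = d := M.mul_div habc
  have key2 : ∀ x z : E, M.mul d x = z → M.le z c →
      M.mul (M.div d c) x = M.div z c := by
    intro x z hx hz
    refine M.div_unique hz ?_ ?_
    · exact ea_le_trans _ (em_mul_le M.toEffectMonoid _ x) hsc
    · rw [← M.mul_assoc, hcd, hx]
  have hA : M.mul (M.div d c) (M.div a d) = M.div a c := key2 _ _ hda ha
  have hB : M.mul (M.div d c) (M.div b d) = M.div b c :=
    key2 _ _ (htb ▸ hb'.symm) hb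
  have hS : M.mul (M.div d c) (M.div d d) = M.div d c := key2 _ _ hde habc
  obtain ⟨hOrth, hEq⟩ := em_mul_add M.toEffectMonoid (M.div d c) hAB
  rw [hA, hB] at hOrth hEq
  rw [heAB, hS] at hEq
  exact ⟨hOrth, hEq⟩
end

section
/- In any effect divisoid, for a ≤ b ≤ c one has (b/c) ⊙ (a/b) = a/c. -/
namespace EDAux

variable {E : Type*} (M : EffectDivisoid E)

lemma orth0' (a : E) : M.orth a M.zero := M.orth_comm (M.zero_orth a)

lemma add0' (a : E) : M.add a M.zero = a := by
  rw [M.add_comm (orth0' M a), M.zero_add]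

lemma compl0 : M.compl M.zero = M.one :=
  (M.compl_unique (M.zero_orth _) (M.zero_add _)).symm

lemma compl_compl (a : E) : M.compl (M.compl a) = a := by
  refine (M.compl_unique (M.orth_comm (M.orth_compl a)) ?_).symm
  rw [M.add_comm (M.orth_comm (M.orth_compl a))]; exact M.add_compl a

lemma cancel {a b c : E} (hab : M.orth a b) (hac : M.orth a c)
    (h : M.add a b = M.add a c) : b = c := by
  set t := M.compl (M.add a b) with ht
  have hob : M.orth (M.add b a) t := by
    rw [← M.add_comm hab]; exact M.orth_compl _
  have hoc : M.orth (M.add c a) t := by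
    rw [← M.add_comm hac, ← h]; exact M.orth_compl _
  have hb : M.add a t = M.compl b := by
    refine M.compl_unique (M.orth_assoc (M.orth_comm hab) hob) ?_
    rw [← M.add_assoc (M.orth_comm hab) hob, M.add_comm (M.orth_comm hab)]
    exact M.add_compl _
  have hc : M.add a t = M.compl c := by
    refine M.compl_unique (M.orth_assoc (M.orth_comm hac) hoc) ?_
    rw [← M.add_assoc (M.orth_comm hac) hoc, M.add_comm (M.orth_comm hac)]
    rw [← h]; exact M.add_compl _
  have := hb.symm.trans hc
  calc b = M.compl (M.compl b) := (compl_compl M b).symm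
    _ = M.compl (M.compl c) := by rw [← this]
    _ = c := compl_compl M c

lemma eq_zero_right {a b : E} (hab : M.orth a b) (h : M.add a b = M.zero) :
    b = M.zero := by
  have h1 : M.orth (M.add a b) M.one := by
    have := M.orth_compl (M.add a b)
    rw [h, compl0] at this
    rw [h]; exact this
  exact M.zero_one (M.orth_assoc_right hab h1)

lemma eq_zero_left {a b : E} (hab : M.orth a b) (h : M.add a b = M.zero) :
    a = M.zero := by
  refine eq_zero_right M (M.orth_comm hab) ?_
  rw [← M.add_comm hab]; exact h

lemma mul_zero' (x : E) : M.mul x M.zero = M.zero := by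
  obtain ⟨h1, h2, h3, h4⟩ := M.distrib (M.zero_orth x) (orth0' M M.one)
  simp only [M.zero_add, add0' M, M.mul_one] at h1 h2 h3 h4
  -- h4 : x = ((x) ⊕ 0·0) ⊕ x·0  after zero_add on (0 ⊕ x)
  have hx : M.add x (M.add (M.mul M.zero M.zero) (M.mul x M.zero)) = M.add x M.zero := by
    rw [add0', ← M.add_assoc h2 h3, ← h4]
  have h0 : M.add (M.mul M.zero M.zero) (M.mul x M.zero) = M.zero :=
    cancel M (M.orth_assoc h2 h3) (orth0' M x) hx
  exact eq_zero_right M (M.orth_assoc_right h2 h3) h0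

lemma zero_mul' (x : E) : M.mul M.zero x = M.zero := by
  obtain ⟨h1, h2, h3, h4⟩ := M.distrib (M.zero_orth M.one) (orth0' M x)
  simp only [M.zero_add, add0' M, M.one_mul, mul_zero' M] at h1 h2 h3 h4
  -- h4 : x = (0·x) ⊕ x
  have hx : M.add x (M.mul M.zero x) = M.add x M.zero := by
    rw [add0', ← M.add_comm h1, ← h4]
  exact cancel M (M.orth_comm h1) (orth0' M x) hx

lemma le_trans' {a b c : E} (h1 : M.le a b) (h2 : M.le b c) : M.le a c := by
  obtain ⟨u, hu, hau⟩ := h1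
  obtain ⟨v, hv, hbv⟩ := h2
  rw [← hau] at hv hbv
  exact ⟨M.add u v, M.orth_assoc hu hv, by rw [← M.add_assoc hu hv]; exact hbv⟩

lemma le_one' (a : E) : M.le a M.one := ⟨M.compl a, M.orth_compl a, M.add_compl a⟩

lemma mul_le_left {x y : E} (z : E) (h : M.le x y) :
    M.le (M.mul z x) (M.mul z y) := by
  obtain ⟨d, hd, he⟩ := h
  obtain ⟨h1, h2, h3, h4⟩ := M.distrib (orth0' M z) hd
  simp only [zero_mul' M, add0' M, he] at h1 h2 h3 h4
  exact ⟨M.mul z d, h2, h4.symm⟩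

end EDAux

/-- In an effect divisoid, for `a ≤ b ≤ c` one has `(b/c) ⊙ (a/b) = a/c`. -/
theorem effectDivisoid_div_mul_div {E : Type*} (M : EffectDivisoid E) {a b c : E}
    (hab : M.le a b) (hbc : M.le b c) :
    M.mul (M.div b c) (M.div a b) = M.div a c := by
  have hac : M.le a c := EDAux.le_trans' M hab hbc
  refine (M.div_unique hac ?_ ?_)
  · refine EDAux.le_trans' M ?_ (M.div_le hbc)
    have := EDAux.mul_le_left M (M.div b c) (EDAux.le_one' M (M.div a b))
    rwa [M.mul_one] at this
  · rw [← M.mul_assoc, M.mul_div hbc, M.mul_div hab]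
end
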